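/- For every variable z, every context Γ, and every term M in Λ↑, one has db_z(‖Γ ⊢ M‖) = {z/Γ}(db_z(M)), where on the left db_z is the map from generalized de Bruijn terms to Λ↑ and on the right db_z is the map from Λ↑ to Λ↑. -/

import Mathlib

/-- Terms of Λ↑: variables, application, named abstraction, explicit weakening. -/
inductive Tm : Type
  | var : ℕ → Tm
  | app : Tm → Tm → Tm
  | lam : ℕ → Tm → Tm
  | up  : Tm → Tm

/-- Renaming functions: `swap y x` is `{yx}`, `lift F x` is `F_x`. -/
inductive Ren : Type
  | swap : ℕ → ℕ → Ren
  | lift : Ren → ℕ → Ren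

/-- Action of a renaming function on a term. -/
def Ren.apply : Ren → Tm → Tm
  | F, .app M N => .app (F.apply M) (F.apply N)
  | F, .lam x M => .lam x ((F.lift x).apply M)
  | .lift F _, .up M => .up (F.apply M)
  | .lift F x, .var z => if z = x then .var x else .up (F.apply (.var z))
  | .swap _ _, .up M => .up M
  | .swap y x, .var z => if z = x then .var y else .up (.var z)
termination_by F M => (sizeOf M, sizeOf F)

/-- Iterated lifting `F_Γ` for a context `Γ = y₁,…,yₙ` (the list `[y₁,…,yₙ]`):
lift by `y₁` first, then `y₂`, …, then `yₙ`. -/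
def Ren.liftCtx (F : Ren) (Γ : List ℕ) : Ren := Γ.foldl Ren.lift F

/-- Alpha-conversion: smallest compatible equivalence with `λx M =α λy {yx}M`. -/
inductive Alpha : Tm → Tm → Prop
  | refl (M) : Alpha M M
  | symm {M N} : Alpha M N → Alpha N M
  | trans {M N P} : Alpha M N → Alpha N P → Alpha M P
  | app {M₁ M₂ N₁ N₂} : Alpha M₁ M₂ → Alpha N₁ N₂ → Alpha (.app M₁ N₁) (.app M₂ N₂)
  | lam {M₁ M₂} (x) : Alpha M₁ M₂ → Alpha (.lam x M₁) (.lam x M₂)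
  | up {M₁ M₂} : Alpha M₁ M₂ → Alpha (.up M₁) (.up M₂)
  | rename (x y M) : Alpha (.lam x M) (.lam y ((Ren.swap y x).apply M))

/-- de Bruijn normalisation `db_z : Λ↑ → Λ↑`. -/
def db (z : ℕ) : Tm → Tm
  | .var x => .var x
  | .up M => .up (db z M)
  | .app M N => .app (db z M) (db z N)
  | .lam x M => .lam z ((Ren.swap z x).apply (db z M))
/-- Derivations of judgments `Γ ⊢ M`.  A context `Γ = y₁,…,yₙ` is the list
`[y₁,…,yₙ]` and `Γ,x` is `Γ ++ [x]`. -/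
inductive Der : List ℕ → Tm → Type
  | varNil (x : ℕ) : Der [] (.var x)
  | varHere (Γ : List ℕ) (x : ℕ) : Der (Γ ++ [x]) (.var x)
  | varThere {Γ : List ℕ} {x : ℕ} (z : ℕ) : z ≠ x → Der Γ (.var x) → Der (Γ ++ [z]) (.var x)
  | app {Γ M N} : Der Γ M → Der Γ N → Der Γ (.app M N)
  | upNil {M} : Der [] M → Der [] (.up M)
  | upCons {Γ M} (x : ℕ) : Der Γ M → Der (Γ ++ [x]) (.up M)
  | lam {Γ M} (x : ℕ) : Der (Γ ++ [x]) M → Der Γ (.lam x M)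

/-- Generalized de Bruijn terms. -/
inductive Db : Type
  | var : ℕ → Db
  | one : Db
  | app : Db → Db → Db
  | lam : Db → Db
  | up  : Db → Db

/-- Auxiliary translation, with the context given in *reversed* order
(head of the list is the last variable of the context). -/
def transAux : List ℕ → Tm → Db
  | Γ, .app M N => .app (transAux Γ M) (transAux Γ N)
  | Γ, .lam x M => .lam (transAux (x :: Γ) M)
  | [], .var x => .var x
  | y :: Γ, .var x => if y = x then .one else .up (transAux Γ (.var x))
  | [], .up M => .up (transAux [] M)
  | _ :: Γ, .up M => .up (transAux Γ M)
termination_by Γ M => (sizeOf M, Γ.length)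

/-- The translation `‖Γ ⊢ M‖`, with `Γ = y₁,…,yₙ` given as the list `[y₁,…,yₙ]`. -/
def transl (Γ : List ℕ) (M : Tm) : Db := transAux Γ.reverse M

/-- The map `db_z` from generalized de Bruijn terms back to `Λ↑`. -/
def dbD (z : ℕ) : Db → Tm
  | .var x => .var x
  | .one => .var z
  | .lam A => .lam z (dbD z A)
  | .app A B => .app (dbD z A) (dbD z B)
  | .up A => .up (dbD z A)

/-- The function `{z/Γ}`, with `Γ = y₁,…,yₙ` given as the list `[y₁,…,yₙ]`:
`{z/nil}M = M` and `{z/x,Δ}M = {z/Δ}({zx}_Δ M)`. -/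
def subAll (z : ℕ) : List ℕ → Tm → Tm
  | [], M => M
  | x :: Δ, M => subAll z Δ (((Ren.swap z x).liftCtx Δ).apply M)


theorem Ren.apply_app (F : Ren) (M N : Tm) :
    F.apply (.app M N) = .app (F.apply M) (F.apply N) := by simp [Ren.apply]

theorem Ren.apply_lam (F : Ren) (x : ℕ) (M : Tm) :
    F.apply (.lam x M) = .lam x ((F.lift x).apply M) := by simp [Ren.apply]

theorem Ren.lift_apply_up (F : Ren) (x : ℕ) (M : Tm) :
    (F.lift x).apply (.up M) = .up (F.apply M) := by simp [Ren.apply]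

theorem Ren.swap_apply_up (y x : ℕ) (M : Tm) :
    (Ren.swap y x).apply (.up M) = .up M := by simp [Ren.apply]

theorem Ren.lift_apply_var (F : Ren) (x v : ℕ) :
    (F.lift x).apply (.var v) = if v = x then .var x else .up (F.apply (.var v)) := by
  simp [Ren.apply]

theorem Ren.swap_apply_var (y x v : ℕ) :
    (Ren.swap y x).apply (.var v) = if v = x then .var y else .up (.var v) := by
  simp [Ren.apply]

theorem Ren.liftCtx_nil (F : Ren) : F.liftCtx [] = F := rfl

theorem Ren.liftCtx_append (F : Ren) (Δ : List ℕ) (w : ℕ) :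
    F.liftCtx (Δ ++ [w]) = (F.liftCtx Δ).lift w := by simp [Ren.liftCtx]

theorem subAll_app (z : ℕ) (Γ : List ℕ) (M N : Tm) :
    subAll z Γ (.app M N) = .app (subAll z Γ M) (subAll z Γ N) := by
  induction Γ generalizing M N with
  | nil => rfl
  | cons x Δ ih => simp [subAll, Ren.apply_app, ih]

theorem subAll_up_append (z : ℕ) (Γ : List ℕ) (w : ℕ) (M : Tm) :
    subAll z (Γ ++ [w]) (.up M) = .up (subAll z Γ M) := by
  induction Γ generalizing M with
  | nil => simp [subAll, Ren.liftCtx_nil, Ren.swap_apply_up]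
  | cons x Δ ih =>
      simp only [List.cons_append, List.append_eq, subAll, Ren.liftCtx_append, Ren.lift_apply_up, ih]

theorem subAll_var_last_eq (z : ℕ) (Γ : List ℕ) (x : ℕ) :
    subAll z (Γ ++ [x]) (.var x) = .var z := by
  induction Γ with
  | nil => simp [subAll, Ren.liftCtx_nil, Ren.swap_apply_var]
  | cons y Δ ih =>
      simpa only [List.cons_append, List.append_eq, subAll, Ren.liftCtx_append, Ren.lift_apply_var,
        if_pos rfl, ↓reduceIte] using ih

theorem subAll_var_last_ne (z : ℕ) (Γ : List ℕ) {w x : ℕ} (h : w ≠ x) :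
    subAll z (Γ ++ [w]) (.var x) = .up (subAll z Γ (.var x)) := by
  cases Γ with
  | nil => simp [subAll, Ren.liftCtx_nil, Ren.swap_apply_var, Ne.symm h]
  | cons y Δ =>
      simp only [List.cons_append, List.append_eq, subAll, Ren.liftCtx_append, Ren.lift_apply_var,
        if_neg (Ne.symm h), subAll_up_append]

theorem renCommVar (F : Ren) (z x : ℕ) (Δ : List ℕ) (v : ℕ) :
    ((F.lift z).liftCtx Δ).apply (((Ren.swap z x).liftCtx Δ).apply (.var v)) =
    ((Ren.swap z x).liftCtx Δ).apply (((F.lift x).liftCtx Δ).apply (.var v)) := by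
  induction Δ using List.reverseRecOn with
  | nil =>
      by_cases h : v = x
      · subst h
        simp [Ren.liftCtx_nil, Ren.swap_apply_var, Ren.lift_apply_var]
      · simp [Ren.liftCtx_nil, Ren.swap_apply_var, Ren.lift_apply_var, h,
          Ren.lift_apply_up, Ren.swap_apply_up]
  | append_singleton Δ w ih =>
      by_cases h : v = w
      · subst h
        simp [Ren.liftCtx_append, Ren.lift_apply_var]
      · simp [Ren.liftCtx_append, Ren.lift_apply_var, h, Ren.lift_apply_up, ih]

theorem renComm (F : Ren) (z x : ℕ) (P : Tm) (Δ : List ℕ) :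
    ((F.lift z).liftCtx Δ).apply (((Ren.swap z x).liftCtx Δ).apply P) =
    ((Ren.swap z x).liftCtx Δ).apply (((F.lift x).liftCtx Δ).apply P) := by
  induction P generalizing Δ with
  | var v => exact renCommVar F z x Δ v
  | app M N ihM ihN => simp [Ren.apply_app, ihM, ihN]
  | lam y M ihM =>
      simp only [Ren.apply_lam, ← Ren.liftCtx_append]
      exact congrArg (Tm.lam y) (ihM (Δ ++ [y]))
  | up M ihM =>
      rcases Δ.eq_nil_or_concat with rfl | ⟨Δ', w, rfl⟩
      · simp [Ren.liftCtx_nil, Ren.swap_apply_up, Ren.lift_apply_up]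
      · simp [Ren.liftCtx_append, Ren.lift_apply_up, ihM]

theorem subAll_lam (z x : ℕ) (Γ : List ℕ) (P : Tm) :
    subAll z Γ (.lam z ((Ren.swap z x).apply P)) = .lam z (subAll z (Γ ++ [x]) P) := by
  induction Γ generalizing P with
  | nil => simp [subAll, Ren.liftCtx_nil]
  | cons y Δ ih =>
      simp only [List.cons_append, List.append_eq, subAll, Ren.apply_lam]
      rw [show (((Ren.swap z y).liftCtx Δ).lift z).apply ((Ren.swap z x).apply P)
            = (Ren.swap z x).apply ((((Ren.swap z y).liftCtx Δ).lift x).apply P) from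
          renComm ((Ren.swap z y).liftCtx Δ) z x P []]
      rw [ih, ← Ren.liftCtx_append]

theorem stmt16_aux (z : ℕ) (L : List ℕ) (M : Tm) :
    dbD z (transAux L M) = subAll z L.reverse (db z M) := by
  induction L, M using transAux.induct with
  | case1 Γ M N ihM ihN => simp [transAux, dbD, db, subAll_app, ihM, ihN]
  | case2 Γ x M ih =>
      simp only [transAux, dbD, db, ih, List.reverse_cons, subAll_lam]
  | case3 x => simp [transAux, dbD, db, subAll]
  | case4 Γ x =>
      simp [transAux, dbD, db, List.reverse_cons, subAll_var_last_eq]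
  | case5 y Γ x h ih =>
      simp only [transAux, if_neg h, dbD, db, ih, List.reverse_cons]
      rw [subAll_var_last_ne z Γ.reverse h]
  | case6 M ih => simp [transAux, dbD, db, subAll, ih]
  | case7 y Γ M ih =>
      simp only [transAux, dbD, db, ih, List.reverse_cons, subAll_up_append]

/-- `db_z(‖Γ ⊢ M‖) = {z/Γ}(db_z(M))`. -/
theorem stmt16 (z : ℕ) (Γ : List ℕ) (M : Tm) :
    dbD z (transl Γ M) = subAll z Γ (db z M) := by
  have h := stmt16_aux z Γ.reverse M
  simpa [transl] using h
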